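/- arXiv:2103.16770 — 16 statements merged into one kernel-verified Lean document; each statement's English description precedes it below -/
import Mathlib

section
/- In a constellation with pre-range, the range operation satisfies: (R1) D(R(s)) = R(s) for all s; (R2) s·R(s) exists for all s; (R3) if s·t exists then R(s)·t exists; (R4) the constellation is normal (for projections e,f, if e·f and f·e both exist then e = f). -/
namespace ConstellationsRange
open Classical

variable {Q : Type*}

/-- An (object-free) constellation: a partial binary operation `mul` (encoded via `Option`)
with a domain operation `D`, satisfying (Q1)-(Q3). -/
structure Constellation (Q : Type*) where
  mul : Q → Q → Option Q
  D : Q → Q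
  /-- (Q1) if `x·(y·z)` exists then `(x·y)·z` exists and the two are equal. -/
  q1 : ∀ x y z yz w, mul y z = some yz → mul x yz = some w →
      ∃ xy, mul x y = some xy ∧ mul xy z = some w
  /-- (Q2) if `x·y` and `y·z` exist then `x·(y·z)` exists. -/
  q2 : ∀ x y z xy yz, mul x y = some xy → mul y z = some yz → (mul x yz).isSome
  /-- `D x` is a right identity. -/
  q3_rid : ∀ x y z, mul y (D x) = some z → z = y
  /-- `D x · x = x`. -/
  q3_mul : ∀ x, mul (D x) x = some x
  /-- `D x` is the unique right identity `e` with `e·x = x`. -/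
  q3_uniq : ∀ x e, (∀ y z, mul y e = some z → z = y) → mul e x = some x → e = D x

/-- The projections of a constellation are the elements of the form `D s`. -/
def IsProj (C : Constellation Q) (e : Q) : Prop := ∃ s, C.D s = e

/-- A pre-range structure: `R s` is the unique smallest projection `e` (w.r.t. the
standard quasiorder `e ≤ f ↔ e·f exists`) such that `s·e` exists. -/
structure PreRange (C : Constellation Q) where
  R : Q → Q
  proj : ∀ s, IsProj C (R s)
  ex : ∀ s, (C.mul s (R s)).isSome
  min : ∀ s f, IsProj C f → (C.mul s f).isSome → (C.mul (R s) f).isSome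
  uniq : ∀ s e, IsProj C e → (C.mul s e).isSome →
      (∀ f, IsProj C f → (C.mul s f).isSome → (C.mul e f).isSome) → e = R s

/-- The natural (quasi)order on a constellation: `s ≤ t` iff `s = D(s)·t`. -/
def natle (C : Constellation Q) (s t : Q) : Prop := C.mul (C.D s) t = some s

/-- The derived partial operation `s∘t := s·t` when `R s = D t`, undefined otherwise. -/
noncomputable def catOf (C : Constellation Q) (R : Q → Q) : Q → Q → Option Q :=
  fun s t => if R s = C.D t then C.mul s t else none

lemma proj_rid (C : Constellation Q) {e : Q} (he : IsProj C e) :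
    ∀ y z, C.mul y e = some z → z = y := by
  obtain ⟨x, rfl⟩ := he
  exact C.q3_rid x

lemma proj_D (C : Constellation Q) {e : Q} (he : IsProj C e) : C.D e = e := by
  obtain ⟨x, rfl⟩ := he
  set e := C.D x with hedef
  have h1 : C.mul (C.D e) e = some e := C.q3_mul e
  have h2 : C.mul e x = some x := C.q3_mul x
  have h3 : (C.mul (C.D e) x).isSome := C.q2 (C.D e) e x e x h1 h2
  obtain ⟨w, hw⟩ := Option.isSome_iff_exists.mp h3
  obtain ⟨xy, hxy1, hxy2⟩ := C.q1 (C.D e) e x x w h2 hw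
  have hxye : xy = e := by rw [h1] at hxy1; exact (Option.some_inj.mp hxy1).symm
  subst hxye
  rw [h2] at hxy2
  have hwx : x = w := (Option.some_inj.mp hxy2)
  subst hwx
  exact C.q3_uniq x (C.D e) (C.q3_rid e) hw

lemma mul_proj_self (C : Constellation Q) {e : Q} (he : IsProj C e) :
    C.mul e e = some e := by
  have := C.q3_mul e
  rwa [proj_D C he] at this

/-- in a constellation with pre-range, (R1)-(R4) hold. -/
theorem stmt0 (C : Constellation Q) (PR : PreRange C) :
    (∀ s, C.D (PR.R s) = PR.R s) ∧
    (∀ s, (C.mul s (PR.R s)).isSome) ∧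
    (∀ s t, (C.mul s t).isSome → (C.mul (PR.R s) t).isSome) ∧
    (∀ e f, IsProj C e → IsProj C f →
      (C.mul e f).isSome → (C.mul f e).isSome → e = f) := by
  refine ⟨fun s => proj_D C (PR.proj s), PR.ex, ?_, ?_⟩
  · intro s t h
    obtain ⟨st, hst⟩ := Option.isSome_iff_exists.mp h
    obtain ⟨xy, hxy1, _⟩ := C.q1 s (C.D t) t t st (C.q3_mul t) hst
    have h2 : (C.mul (PR.R s) (C.D t)).isSome :=
      PR.min s (C.D t) ⟨t, rfl⟩ (by rw [hxy1]; rfl)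
    obtain ⟨w, hw⟩ := Option.isSome_iff_exists.mp h2
    exact C.q2 (PR.R s) (C.D t) t w t hw (C.q3_mul t)
  · intro e f he hf hef hfe
    obtain ⟨v, hv⟩ := Option.isSome_iff_exists.mp hef
    have hv' : v = e := proj_rid C hf e v hv
    obtain ⟨w, hw⟩ := Option.isSome_iff_exists.mp hfe
    have hw' : w = f := proj_rid C he f w hw
    rw [hv'] at hv
    rw [hw'] at hw
    have h1 : e = PR.R e :=
      PR.uniq e e he (by rw [mul_proj_self C he]; rfl) (fun _ _ h => h)
    have h2 : f = PR.R e := by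
      refine PR.uniq e f hf hef (fun g hg hg2 => ?_)
      obtain ⟨eg, heg⟩ := Option.isSome_iff_exists.mp hg2
      have heg' : eg = e := proj_rid C hg e eg heg
      rw [heg'] at heg
      obtain ⟨xy, hxy1, hxy2⟩ := C.q1 f e g e f heg hw
      rw [hw] at hxy1
      rw [← Option.some_inj.mp hxy1] at hxy2
      rw [hxy2]; rfl
    rw [h1, h2]

end ConstellationsRange
end

section
/- If (Q,·,D) is a constellation equipped with a unary operation R satisfying (R1) D(R(s)) = R(s), (R2) s·R(s) exists, (R3) if s·t exists then R(s)·t exists, and (R4) normality, then for each s ∈ Q, R(s) is the unique smallest projection e (in the standard order on D(Q)) for which s·e exists; hence Q is a constellation with pre-range. -/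
namespace ConstellationsRange
open Classical

variable {Q : Type*}

/-- a constellation with an operation `R` satisfying (R1)-(R4) is a
constellation with pre-range, `R s` being the unique smallest projection `e` with
`s·e` defined. -/
theorem stmt1 (C : Constellation Q) (R : Q → Q)
    (hR1 : ∀ s, C.D (R s) = R s)
    (hR2 : ∀ s, (C.mul s (R s)).isSome)
    (hR3 : ∀ s t, (C.mul s t).isSome → (C.mul (R s) t).isSome)
    (hR4 : ∀ e f, IsProj C e → IsProj C f →
      (C.mul e f).isSome → (C.mul f e).isSome → e = f) :
    ∀ s, IsProj C (R s) ∧ (C.mul s (R s)).isSome ∧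
      (∀ f, IsProj C f → (C.mul s f).isSome → (C.mul (R s) f).isSome) ∧
      (∀ e, IsProj C e → (C.mul s e).isSome →
        (∀ f, IsProj C f → (C.mul s f).isSome → (C.mul e f).isSome) → e = R s) := by
  intro s
  refine ⟨⟨R s, hR1 s⟩, hR2 s, fun f _ hf => hR3 s f hf, ?_⟩
  intro e he hse hmin
  exact hR4 e (R s) he ⟨R s, hR1 s⟩ (hmin (R s) ⟨R s, hR1 s⟩ (hR2 s)) (hR3 s e hse)

end ConstellationsRange
end

section
/- In a constellation with pre-range Q, for all s,t ∈ Q, s·t exists if and only if R(s)·t exists; moreover if s·t exists then R(s·t) ≤ R(t) in the standard order on projections. -/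
namespace ConstellationsRange
open Classical

variable {Q : Type*}

/-- in a constellation with pre-range, `s·t` exists iff `R(s)·t` exists,
and if `s·t` exists then `R(s·t) ≤ R(t)` in the standard order on projections. -/
theorem stmt2 (C : Constellation Q) (PR : PreRange C) :
    (∀ s t, (C.mul s t).isSome ↔ (C.mul (PR.R s) t).isSome) ∧
    (∀ s t u, C.mul s t = some u → (C.mul (PR.R u) (PR.R t)).isSome) := by
  -- s · R s = s
  have hsRs : ∀ s, C.mul s (PR.R s) = some s := by
    intro s
    obtain ⟨v, hv⟩ := Option.isSome_iff_exists.mp (PR.ex s)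
    obtain ⟨a, ha⟩ := PR.proj s
    have := C.q3_rid a s v (by rw [ha]; exact hv)
    rw [hv, this]
  -- s·t exists → s·(D t) = some s
  have hDt : ∀ s t u, C.mul s t = some u → C.mul s (C.D t) = some s := by
    intro s t u h
    obtain ⟨xy, hxy, _⟩ := C.q1 s (C.D t) t t u (C.q3_mul t) h
    rwa [C.q3_rid t s xy hxy] at hxy
  constructor
  · intro s t
    constructor
    · intro h
      obtain ⟨u, hu⟩ := Option.isSome_iff_exists.mp h
      have h1 := hDt s t u hu
      have h2 : (C.mul (PR.R s) (C.D t)).isSome :=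
        PR.min s (C.D t) ⟨t, rfl⟩ (by rw [h1]; rfl)
      obtain ⟨w, hw⟩ := Option.isSome_iff_exists.mp h2
      exact C.q2 (PR.R s) (C.D t) t w t hw (C.q3_mul t)
    · intro h
      obtain ⟨u, hu⟩ := Option.isSome_iff_exists.mp h
      have h1 := hDt (PR.R s) t u hu
      obtain ⟨xy, hxy, hxyt⟩ := C.q1 s (PR.R s) (C.D t) (PR.R s) s h1 (hsRs s)
      have hxs : xy = s := by rw [hsRs s] at hxy; exact (Option.some_injective _ hxy).symm
      rw [hxs] at hxyt
      exact C.q2 s (C.D t) t s t hxyt (C.q3_mul t)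
  · intro s t u h
    obtain ⟨xy, hxy, hxyt⟩ := C.q1 s t (PR.R t) t u (hsRs t) h
    have hxu : xy = u := by rw [h] at hxy; exact (Option.some_injective _ hxy).symm
    rw [hxu] at hxyt
    exact PR.min u (PR.R t) (PR.proj t) (by rw [hxyt]; rfl)

end ConstellationsRange
end

section
/- Let (Q,·,D,R) be a constellation with pre-range. Define s∘t = s·t if R(s) = D(t), and undefined otherwise. Then (Q,∘,D,R) is a category if and only if Q satisfies the right congruence condition R(R(s)·t) = R(s·t) whenever s·t exists. -/
/-!
Identities and (C2) hold for `∘` over any pre-range: projections are two-sided identities for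
`∘`, and `D(y·z) = D(y)`. For (C1) the only missing ingredient is `R(x·y) = R(y)` when
`R(x) = D(y)`, which is the right congruence condition at `R(x)·y = D(y)·y = y`.
Conversely, with `v = R(s)·t` one has `s ∘ v = s·t` and `v ∘ R(v) = v`, so associativity of `∘`
forces `(s·t) ∘ R(v)` to exist, i.e. `R(s·t) = R(v)`.
-/

namespace ConstellationsRange
open Classical

variable {Q : Type*}

/-- Identity of a partial binary operation. -/
def CatIdent (m : Q → Q → Option Q) (e : Q) : Prop :=
  (∀ y z, m y e = some z → z = y) ∧ (∀ y z, m e y = some z → z = y)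

/-- The axioms (C1)-(C3) for an object-free category. -/
def IsCategoryOp (m : Q → Q → Option Q) : Prop :=
  (∀ x y z, (m y z).bind (m x) = (m x y).bind (fun xy => m xy z)) ∧
  (∀ x y z xy yz, m x y = some xy → m y z = some yz → ((m y z).bind (m x)).isSome) ∧
  (∀ x, ∃ e f, CatIdent m e ∧ CatIdent m f ∧ (m e x).isSome ∧ (m x f).isSome)

def RightCongruence (C : Constellation Q) (R : Q → Q) : Prop :=
  ∀ s t u v, C.mul s t = some u → C.mul (R s) t = some v → R v = R u

namespace Constellation

variable (C : Constellation Q) {x y z xy yz : Q}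

theorem exists_mul_eq_of_mul_eq (hxy : C.mul x y = some xy) (hyz : C.mul y z = some yz) :
    ∃ w, C.mul x yz = some w ∧ C.mul xy z = some w := by
  obtain ⟨w, hw⟩ := Option.isSome_iff_exists.mp (C.q2 x y z xy yz hxy hyz)
  obtain ⟨xy', hxy', hw'⟩ := C.q1 x y z yz w hyz hw
  rw [hxy, Option.some_inj] at hxy'
  exact ⟨w, hw, hxy' ▸ hw'⟩

theorem mul_D_D (x : Q) : C.mul (C.D x) (C.D x) = some (C.D x) := by
  obtain ⟨a, ha, -⟩ := C.q1 (C.D x) (C.D x) x x x (C.q3_mul x) (C.q3_mul x)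
  rwa [C.q3_rid x (C.D x) a ha] at ha

theorem D_D (x : Q) : C.D (C.D x) = C.D x :=
  (C.q3_uniq (C.D x) (C.D x) (C.q3_rid x) (C.mul_D_D x)).symm

theorem D_eq_of_mul_eq (h : C.mul y z = some yz) : C.D yz = C.D y := by
  obtain ⟨w, hw, hyz⟩ := C.exists_mul_eq_of_mul_eq (C.q3_mul y) h
  rw [h, Option.some_inj] at hyz
  exact (C.q3_uniq yz (C.D y) (C.q3_rid y) (hyz ▸ hw)).symm

end Constellation

namespace IsProj

variable {C : Constellation Q} {e : Q}

theorem D_eq (h : IsProj C e) : C.D e = e := by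
  obtain ⟨s, rfl⟩ := h
  exact C.D_D s

theorem eq_of_mul_eq (h : IsProj C e) {y z : Q} (hy : C.mul y e = some z) : z = y := by
  obtain ⟨s, rfl⟩ := h
  exact C.q3_rid s y z hy

theorem mul_self (h : IsProj C e) : C.mul e e = some e := by
  obtain ⟨s, rfl⟩ := h
  exact C.mul_D_D s

end IsProj

namespace PreRange

variable {C : Constellation Q} (PR : PreRange C)

theorem R_eq_self_of_isProj {e : Q} (h : IsProj C e) : PR.R e = e :=
  (PR.uniq e e h (by rw [h.mul_self]; rfl) fun _ _ hef => hef).symm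

theorem mul_R (s : Q) : C.mul s (PR.R s) = some s := by
  obtain ⟨z, hz⟩ := Option.isSome_iff_exists.mp (PR.ex s)
  rw [hz, (PR.proj s).eq_of_mul_eq hz]

theorem R_mul_eq_of_rightCongruence (hc : RightCongruence C PR.R) {x y xy : Q}
    (hxy : C.mul x y = some xy) (hR : PR.R x = C.D y) : PR.R xy = PR.R y :=
  (hc x y xy y hxy (hR ▸ C.q3_mul y)).symm

end PreRange

section catOf

variable {C : Constellation Q}

theorem catOf_eq_some {R : Q → Q} {s t u : Q} :
    catOf C R s t = some u ↔ R s = C.D t ∧ C.mul s t = some u := by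
  unfold catOf
  split_ifs <;> simp_all

variable (PR : PreRange C)

theorem catOf_D_self (x : Q) : catOf C PR.R (C.D x) x = some x :=
  catOf_eq_some.mpr ⟨PR.R_eq_self_of_isProj ⟨x, rfl⟩, C.q3_mul x⟩

theorem catOf_R_self (x : Q) : catOf C PR.R x (PR.R x) = some x :=
  catOf_eq_some.mpr ⟨(PR.proj x).D_eq.symm, PR.mul_R x⟩

theorem catIdent_catOf_of_isProj {e : Q} (h : IsProj C e) : CatIdent (catOf C PR.R) e := by
  constructor
  · intro y z hz
    exact h.eq_of_mul_eq (catOf_eq_some.mp hz).2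
  · intro y z hz
    obtain ⟨hRD, hyz⟩ := catOf_eq_some.mp hz
    rw [PR.R_eq_self_of_isProj h] at hRD
    rw [hRD, C.q3_mul y, Option.some_inj] at hyz
    exact hyz.symm

theorem catOf_bind_isSome {x y z xy yz : Q} (hxy : catOf C PR.R x y = some xy)
    (hyz : catOf C PR.R y z = some yz) :
    ((catOf C PR.R y z).bind (catOf C PR.R x)).isSome := by
  obtain ⟨hRx, hxy⟩ := catOf_eq_some.mp hxy
  obtain ⟨-, hyz'⟩ := catOf_eq_some.mp hyz
  obtain ⟨w, hw, -⟩ := C.exists_mul_eq_of_mul_eq hxy hyz'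
  rw [hyz, Option.bind_some, catOf_eq_some.mpr ⟨C.D_eq_of_mul_eq hyz' ▸ hRx, hw⟩]
  rfl

variable {PR}

theorem catOf_q1 (hc : RightCongruence C PR.R) {x y z yz w : Q}
    (hyz : catOf C PR.R y z = some yz) (hw : catOf C PR.R x yz = some w) :
    ∃ xy, catOf C PR.R x y = some xy ∧ catOf C PR.R xy z = some w := by
  obtain ⟨hRy, hyz⟩ := catOf_eq_some.mp hyz
  obtain ⟨hRx, hw⟩ := catOf_eq_some.mp hw
  rw [C.D_eq_of_mul_eq hyz] at hRx
  obtain ⟨xy, hxy, hxyz⟩ := C.q1 x y z yz w hyz hw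
  refine ⟨xy, catOf_eq_some.mpr ⟨hRx, hxy⟩, catOf_eq_some.mpr ⟨?_, hxyz⟩⟩
  rw [PR.R_mul_eq_of_rightCongruence hc hxy hRx, hRy]

theorem catOf_q1_converse (hc : RightCongruence C PR.R) {x y z xy w : Q}
    (hxy : catOf C PR.R x y = some xy) (hw : catOf C PR.R xy z = some w) :
    ∃ yz, catOf C PR.R y z = some yz ∧ catOf C PR.R x yz = some w := by
  obtain ⟨hRx, hxy⟩ := catOf_eq_some.mp hxy
  obtain ⟨hRxy, hw⟩ := catOf_eq_some.mp hw
  have hRy : PR.R y = C.D z := PR.R_mul_eq_of_rightCongruence hc hxy hRx ▸ hRxy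
  obtain ⟨yz, hyz, -⟩ := C.exists_mul_eq_of_mul_eq (hRy ▸ PR.mul_R y) (C.q3_mul z)
  obtain ⟨w', hw', hxyz⟩ := C.exists_mul_eq_of_mul_eq hxy hyz
  rw [hw, Option.some_inj] at hxyz
  refine ⟨yz, catOf_eq_some.mpr ⟨hRy, hyz⟩, catOf_eq_some.mpr ⟨?_, hxyz ▸ hw'⟩⟩
  rw [C.D_eq_of_mul_eq hyz, hRx]

theorem catOf_assoc (hc : RightCongruence C PR.R) (x y z : Q) :
    (catOf C PR.R y z).bind (catOf C PR.R x) =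
      (catOf C PR.R x y).bind fun xy => catOf C PR.R xy z := by
  refine Option.ext fun w => ⟨fun h => ?_, fun h => ?_⟩
  · obtain ⟨yz, hyz, hw⟩ := Option.bind_eq_some_iff.mp h
    exact Option.bind_eq_some_iff.mpr (catOf_q1 hc hyz hw)
  · obtain ⟨xy, hxy, hw⟩ := Option.bind_eq_some_iff.mp h
    exact Option.bind_eq_some_iff.mpr (catOf_q1_converse hc hxy hw)

theorem isCategoryOp_catOf (hc : RightCongruence C PR.R) : IsCategoryOp (catOf C PR.R) :=
  ⟨catOf_assoc hc, fun _ _ _ _ _ => catOf_bind_isSome PR,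
    fun x => ⟨C.D x, PR.R x, catIdent_catOf_of_isProj PR ⟨x, rfl⟩,
      catIdent_catOf_of_isProj PR (PR.proj x), by rw [catOf_D_self]; rfl,
      by rw [catOf_R_self]; rfl⟩⟩

theorem rightCongruence_of_catOf_assoc
    (h : ∀ x y z, (catOf C PR.R y z).bind (catOf C PR.R x) =
      (catOf C PR.R x y).bind fun xy => catOf C PR.R xy z) :
    RightCongruence C PR.R := by
  intro s t u v hst hv
  have hDv : C.D v = PR.R s := (C.D_eq_of_mul_eq hv).trans (PR.proj s).D_eq
  obtain ⟨w, hsv, hw⟩ := C.exists_mul_eq_of_mul_eq (PR.mul_R s) hv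
  rw [hst, Option.some_inj] at hw
  have hsv : catOf C PR.R s v = some u := catOf_eq_some.mpr ⟨hDv.symm, hw ▸ hsv⟩
  have huRv := h s v (PR.R v)
  rw [catOf_R_self, Option.bind_some, hsv, Option.bind_some] at huRv
  have hRu := (catOf_eq_some.mp huRv.symm).1
  rwa [(PR.proj v).D_eq, eq_comm] at hRu

end catOf

/-- for a constellation with pre-range, `s∘t := s·t` when `R s = D t`
(undefined otherwise) makes `(Q,∘,D,R)` a category iff the right congruence condition
`R(R(s)·t) = R(s·t)` holds whenever `s·t` exists. -/
theorem stmt3 (C : Constellation Q) (PR : PreRange C) :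
    (IsCategoryOp (catOf C PR.R) ∧
      (∀ x, catOf C PR.R (C.D x) x = some x) ∧
      (∀ x, catOf C PR.R x (PR.R x) = some x))
    ↔ (∀ s t u v, C.mul s t = some u → C.mul (PR.R s) t = some v →
        PR.R v = PR.R u) :=
  ⟨fun h => rightCongruence_of_catOf_assoc h.1.1,
    fun hc => ⟨isCategoryOp_catOf hc, catOf_D_self PR, catOf_R_self PR⟩⟩

end ConstellationsRange
end

section
/- A constellation with range (Q,·,D,R) is left cancellative if and only if its derived category (Q,∘,D,R) is left cancellative (i.e., has all morphisms epimorphisms). -/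
namespace ConstellationsRange
open Classical

variable {Q : Type*}

/-- a constellation with range is left cancellative iff its derived
category is left cancellative. -/
theorem stmt4 (C : Constellation Q) (PR : PreRange C)
    (hcong : ∀ s t u v, C.mul s t = some u → C.mul (PR.R s) t = some v →
      PR.R v = PR.R u) :
    (∀ a b c u, C.mul a b = some u → C.mul a c = some u →
        C.mul (PR.R a) b = C.mul (PR.R a) c)
    ↔ (∀ x y z w, catOf C PR.R x y = some w → catOf C PR.R x z = some w → y = z) := by
  constructor
  · intro hlc x y z w hxy hxz
    unfold catOf at hxy hxz
    by_cases h1 : PR.R x = C.D y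
    · by_cases h2 : PR.R x = C.D z
      · rw [if_pos h1] at hxy
        rw [if_pos h2] at hxz
        have key := hlc x y z w hxy hxz
        have hy : C.mul (PR.R x) y = some y := by rw [h1]; exact C.q3_mul y
        have hz : C.mul (PR.R x) z = some z := by rw [h2]; exact C.q3_mul z
        rw [hy, hz] at key
        exact Option.some.inj key
      · rw [if_neg h2] at hxz; exact absurd hxz (by simp)
    · rw [if_neg h1] at hxy; exact absurd hxy (by simp)
  · intro hcat a b c u hab hac
    -- basic facts
    have mulR : ∀ s : Q, C.mul s (PR.R s) = some s := by
      intro s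
      obtain ⟨q, hq⟩ := Option.isSome_iff_exists.mp (PR.ex s)
      obtain ⟨s0, hs0⟩ := PR.proj s
      have := C.q3_rid s0 s q (by rw [hs0]; exact hq)
      rw [this] at hq; exact hq
    have Didem : ∀ s : Q, C.D (C.D s) = C.D s := by
      intro s
      exact (C.q3_rid s (C.D (C.D s)) (C.D s) (C.q3_mul (C.D s))).symm
    have Dmul : ∀ s t v, C.mul s t = some v → C.D v = C.D s := by
      intro s t v hst
      have h1 := C.q3_mul s
      have h2 := C.q2 (C.D s) s t s v h1 hst
      obtain ⟨k, hk⟩ := Option.isSome_iff_exists.mp h2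
      obtain ⟨xy, hxy1, hxy2⟩ := C.q1 (C.D s) s t v k hst hk
      have : xy = s := (Option.some.inj (h1.symm.trans hxy1)).symm
      rw [this] at hxy2
      have hkv : k = v := (Option.some.inj (hst.symm.trans hxy2)).symm
      rw [hkv] at hk
      exact (C.q3_uniq v (C.D s) (fun y z => C.q3_rid s y z) hk).symm
    -- R a · b exists
    have exRb : ∀ t v, C.mul a t = some v → ∃ t', C.mul (PR.R a) t = some t' := by
      intro t v hat
      obtain ⟨xy, hxy1, _⟩ := C.q1 a (C.D t) t t v (C.q3_mul t) hat
      have hmin := PR.min a (C.D t) ⟨t, rfl⟩ (by rw [hxy1]; simp)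
      obtain ⟨p, hp⟩ := Option.isSome_iff_exists.mp hmin
      have := C.q2 (PR.R a) (C.D t) t p t hp (C.q3_mul t)
      exact Option.isSome_iff_exists.mp this
    obtain ⟨b', hb'⟩ := exRb b u hab
    obtain ⟨c', hc'⟩ := exRb c u hac
    -- a · b' = some u
    have key : ∀ t t', C.mul a t = some u → C.mul (PR.R a) t = some t' →
        C.mul a t' = some u := by
      intro t t' hat ht'
      have h2 := C.q2 a (PR.R a) t a t' (mulR a) ht'
      obtain ⟨w, hw⟩ := Option.isSome_iff_exists.mp h2
      obtain ⟨xy, hxy1, hxy2⟩ := C.q1 a (PR.R a) t t' w ht' hw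
      have : xy = a := (Option.some.inj ((mulR a).symm.trans hxy1)).symm
      rw [this] at hxy2
      have : w = u := (Option.some.inj (hat.symm.trans hxy2)).symm
      rw [this] at hw; exact hw
    have hab' := key b b' hab hb'
    have hac' := key c c' hac hc'
    -- D b' = R a
    have hD : ∀ t t', C.mul (PR.R a) t = some t' → PR.R a = C.D t' := by
      intro t t' ht'
      have := Dmul (PR.R a) t t' ht'
      obtain ⟨s0, hs0⟩ := PR.proj a
      rw [this, ← hs0, Didem]
    have hcb : catOf C PR.R a b' = some u := by
      unfold catOf; rw [if_pos (hD b b' hb')]; exact hab'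
    have hcc : catOf C PR.R a c' = some u := by
      unfold catOf; rw [if_pos (hD c c' hc')]; exact hac'
    have : b' = c' := hcat a b' c' u hcb hcc
    rw [hb', hc', this]


end ConstellationsRange
end

section
/- If Q is a normal constellation and ≤ is its natural order (s ≤ t iff s = D(s)·t), then (Q,·,D,≤) is an ordered constellation with restrictions given by e|s = e·s whenever e ≤ D(s). If moreover Q is a constellation with range, then a ≤ b implies R(a) ≤ R(b). -/
namespace ConstellationsRange
open Classical

variable {Q : Type*}

/-- Projections are idempotent. -/
lemma proj_idem (C : Constellation Q) {e : Q} (h : IsProj C e) :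
    C.mul e e = some e := by
  obtain ⟨s, rfl⟩ := h
  obtain ⟨xy, h1, _⟩ := C.q1 (C.D s) (C.D s) s s s (C.q3_mul s) (C.q3_mul s)
  have hx : xy = C.D s := C.q3_rid s (C.D s) xy h1
  rw [h1, hx]

/-- `D e = e` for projections. -/
lemma D_proj (C : Constellation Q) {e : Q} (h : IsProj C e) : C.D e = e := by
  obtain ⟨s, rfl⟩ := h
  exact (C.q3_uniq (C.D s) (C.D s) (fun y z hz => C.q3_rid s y z hz)
    (proj_idem C ⟨s, rfl⟩)).symm

/-- A defined product with a projection on the right is the identity. -/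
lemma mul_proj (C : Constellation Q) {e y z : Q} (h : IsProj C e)
    (hz : C.mul y e = some z) : z = y := by
  obtain ⟨s, rfl⟩ := h
  exact C.q3_rid s y z hz

/-- `D (s·t) = D s` whenever `s·t` is defined. -/
lemma D_mul (C : Constellation Q) {s t u : Q} (h : C.mul s t = some u) :
    C.D u = C.D s := by
  obtain ⟨w, hw⟩ := Option.isSome_iff_exists.mp
    (C.q2 (C.D s) s t s u (C.q3_mul s) h)
  obtain ⟨xy, h1, h3⟩ := C.q1 (C.D s) s t u w h hw
  have hx : xy = s := by rw [C.q3_mul s] at h1; exact (Option.some.inj h1).symm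
  rw [hx, h] at h3
  have hwu : u = w := Option.some.inj h3
  subst hwu
  exact (C.q3_uniq u (C.D s) (fun y z hz => C.q3_rid s y z hz) hw).symm

/-- a normal constellation with the natural order is an ordered
constellation with restrictions `e|s = e·s` (for projections `e ≤ D s`); if moreover
it has a range operation, then `a ≤ b` implies `R a ≤ R b`. -/
theorem stmt5 (C : Constellation Q)
    (hN : ∀ e f, IsProj C e → IsProj C f →
      (C.mul e f).isSome → (C.mul f e).isSome → e = f) :
    (∀ s, natle C s s) ∧
    (∀ s t, natle C s t → natle C t s → s = t) ∧
    (∀ s t u, natle C s t → natle C t u → natle C s u) ∧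
    (∀ a b c d ac bd, natle C a b → natle C c d →
      C.mul a c = some ac → C.mul b d = some bd → natle C ac bd) ∧
    (∀ a b, natle C a b → natle C (C.D a) (C.D b)) ∧
    (∀ s e, IsProj C e → natle C e (C.D s) →
      ∃ x, C.mul e s = some x ∧ natle C x s ∧ C.D x = e ∧
        ∀ y, natle C y s → C.D y = e → y = x) ∧
    (∀ PR : PreRange C,
      (∀ s t u v, C.mul s t = some u → C.mul (PR.R s) t = some v →
        PR.R v = PR.R u) →
      ∀ a b, natle C a b → natle C (PR.R a) (PR.R b)) := by
  refine ⟨fun s => C.q3_mul s, ?_, ?_, ?_, ?_, ?_, ?_⟩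
  · -- antisymmetry
    intro s t hst hts
    obtain ⟨xy, h1, _⟩ := C.q1 (C.D s) (C.D t) s t s hts hst
    obtain ⟨zy, h2, _⟩ := C.q1 (C.D t) (C.D s) t s t hst hts
    have heq : C.D s = C.D t := hN _ _ ⟨s, rfl⟩ ⟨t, rfl⟩
      (by rw [h1]; rfl) (by rw [h2]; rfl)
    have hst' : C.mul (C.D s) t = some s := hst
    rw [heq, C.q3_mul t] at hst'
    exact (Option.some.inj hst').symm
  · -- transitivity
    intro s t u hst htu
    obtain ⟨xy, h1, h2⟩ := C.q1 (C.D s) (C.D t) u t s htu hst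
    have hx : xy = C.D s := C.q3_rid t (C.D s) xy h1
    rw [hx] at h2
    exact h2
  · -- (O1)
    intro a b c d ac bd hab hcd hac hbd
    -- a·d = ac
    obtain ⟨xy, h1, h2⟩ := C.q1 a (C.D c) d c ac hcd hac
    have hx : xy = a := C.q3_rid c a xy h1
    rw [hx] at h2
    -- D a · bd = ac
    obtain ⟨w, hw⟩ := Option.isSome_iff_exists.mp
      (C.q2 (C.D a) b d a bd hab hbd)
    obtain ⟨x2, h3, h4⟩ := C.q1 (C.D a) b d bd w hbd hw
    have hx2 : x2 = a := by rw [hab] at h3; exact (Option.some.inj h3).symm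
    rw [hx2, h2] at h4
    have hwac : ac = w := Option.some.inj h4
    subst hwac
    show C.mul (C.D ac) bd = some ac
    rw [D_mul C hac]
    exact hw
  · -- (O2)
    intro a b hab
    obtain ⟨xy, h1, _⟩ := C.q1 (C.D a) (C.D b) b b a (C.q3_mul b) hab
    have hx : xy = C.D a := C.q3_rid b (C.D a) xy h1
    rw [hx] at h1
    show C.mul (C.D (C.D a)) (C.D b) = some (C.D a)
    rw [D_proj C ⟨a, rfl⟩]
    exact h1
  · -- restrictions
    intro s e he hele
    have hDe : C.D e = e := D_proj C he
    have hele' : C.mul (C.D e) (C.D s) = some e := hele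
    rw [hDe] at hele'
    obtain ⟨x, hx⟩ := Option.isSome_iff_exists.mp
      (C.q2 e (C.D s) s e s hele' (C.q3_mul s))
    refine ⟨x, hx, ?_, D_mul C hx ▸ hDe, ?_⟩
    · show C.mul (C.D x) s = some x
      rw [D_mul C hx, hDe]
      exact hx
    · intro y hy hDy
      have : C.mul (C.D y) s = some y := hy
      rw [hDy] at this
      rw [this] at hx
      exact Option.some.inj hx
  · -- range
    intro PR _ a b hab
    -- a · R b exists
    obtain ⟨u, hu⟩ := Option.isSome_iff_exists.mp (PR.ex b)
    obtain ⟨w, hw⟩ := Option.isSome_iff_exists.mp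
      (C.q2 (C.D a) b (PR.R b) a u hab hu)
    obtain ⟨x2, h3, h4⟩ := C.q1 (C.D a) b (PR.R b) u w hu hw
    have hx2 : x2 = a := by rw [hab] at h3; exact (Option.some.inj h3).symm
    rw [hx2] at h4
    -- so R a · R b exists
    obtain ⟨z, hz⟩ := Option.isSome_iff_exists.mp
      (PR.min a (PR.R b) (PR.proj b) (Option.isSome_iff_exists.mpr ⟨w, h4⟩))
    have hzR : z = PR.R a := mul_proj C (PR.proj b) hz
    subst hzR
    show C.mul (C.D (PR.R a)) (PR.R b) = some (PR.R a)
    rw [D_proj C (PR.proj a)]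
    exact hz

end ConstellationsRange
end

section
/- In an ordered category with restrictions, for an identity e and elements s,t with e ≤ D(s) and R(s) ≤ D(t): (1) R(e|s)|t = R(e|s)|(R(s)|t), all these restrictions existing; (2) if s∘t exists then e|(s∘t) = (e|s)∘(R(e|s)|t). -/
namespace ConstellationsRange
open Classical

variable {Q : Type*}

/-- An object-free category, with domain and range operations. All fields are
standard properties of (object-free) categories. -/
structure PCat (Q : Type*) where
  comp : Q → Q → Option Q
  D : Q → Q
  R : Q → Q
  /-- (C1) `x∘(y∘z)` exists iff `(x∘y)∘z` exists, and then they are equal. -/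
  c1 : ∀ x y z, (comp y z).bind (comp x) = (comp x y).bind (fun xy => comp xy z)
  /-- (C2) -/
  c2 : ∀ x y z xy yz, comp x y = some xy → comp y z = some yz → (comp x yz).isSome
  dId : ∀ x, comp (D x) x = some x
  rId : ∀ x, comp x (R x) = some x
  dL : ∀ x y z, comp (D x) y = some z → z = y
  dR' : ∀ x y z, comp y (D x) = some z → z = y
  rL : ∀ x y z, comp (R x) y = some z → z = y
  rR : ∀ x y z, comp y (R x) = some z → z = y
  /-- The product `x∘y` exists iff `R x = D y`. -/
  defIff : ∀ x y, (comp x y).isSome ↔ R x = D y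
  dD : ∀ x, D (D x) = D x
  rD : ∀ x, R (D x) = D x
  dRx : ∀ x, D (R x) = R x
  rRx : ∀ x, R (R x) = R x
  dComp : ∀ x y z, comp x y = some z → D z = D x
  rComp : ∀ x y z, comp x y = some z → R z = R y

/-- Epimorphism in an object-free category: `s∘x = s∘y` implies `x = y`. -/
def Epi (C : PCat Q) (s : Q) : Prop :=
  ∀ x y w, C.comp s x = some w → C.comp s y = some w → x = y

/-- Monomorphism: `x∘m = y∘m` implies `x = y`. -/
def Mono (C : PCat Q) (m : Q) : Prop :=
  ∀ x y w, C.comp x m = some w → C.comp y m = some w → x = y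

/-- Isomorphism. -/
def Iso (C : PCat Q) (a : Q) : Prop :=
  ∃ b, C.comp a b = some (C.D a) ∧ C.comp b a = some (C.D b)

/-- An ordered category with restrictions. -/
structure OrderedCatRes (Q : Type*) extends PCat Q where
  le : Q → Q → Prop
  le_refl : ∀ s, le s s
  le_antisymm : ∀ s t, le s t → le t s → s = t
  le_trans : ∀ s t u, le s t → le t u → le s u
  /-- (O1) -/
  o1 : ∀ a b c d ac bd, le a b → le c d → comp a c = some ac → comp b d = some bd → le ac bd
  /-- (O2) -/
  o2 : ∀ a b, le a b → le (D a) (D b)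
  /-- (O2') -/
  o2' : ∀ a b, le a b → le (R a) (R b)
  /-- the restriction `e|s`, for identities `e ≤ D s`. -/
  rstr : Q → Q → Q
  rstr_le : ∀ e s, D e = e → le e (D s) → le (rstr e s) s
  rstr_dom : ∀ e s, D e = e → le e (D s) → D (rstr e s) = e
  /-- (O3) uniqueness: `e|s` is the unique `x ≤ s` with `D x = e`. -/
  rstr_uniq : ∀ e s x, D e = e → le e (D s) → le x s → D x = e → x = rstr e s

/-- in an ordered category with restrictions, for an identity `e` and
elements `s,t` with `e ≤ D s` and `R s ≤ D t`:
(1) `R(e|s)|t = R(e|s)|(R(s)|t)` (all restrictions existing), and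
(2) if `s∘t` exists then `e|(s∘t) = (e|s)∘(R(e|s)|t)`. -/
theorem stmt7 (C : OrderedCatRes Q) :
    ∀ e s t, C.D e = e → C.le e (C.D s) → C.le (C.R s) (C.D t) →
      (C.le (C.R (C.rstr e s)) (C.D t) ∧
       C.le (C.R (C.rstr e s)) (C.D (C.rstr (C.R s) t)) ∧
       C.rstr (C.R (C.rstr e s)) t
         = C.rstr (C.R (C.rstr e s)) (C.rstr (C.R s) t)) ∧
      (∀ st, C.comp s t = some st →
        C.comp (C.rstr e s) (C.rstr (C.R (C.rstr e s)) t)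
          = some (C.rstr e st)) := by
  intro e s t he hes hst
  -- basic facts about e|s
  have hles : C.le (C.rstr e s) s := C.rstr_le e s he hes
  have hdes : C.D (C.rstr e s) = e := C.rstr_dom e s he hes
  set f := C.R (C.rstr e s) with hf
  have hfid : C.D f = f := C.dRx _
  have hfRs : C.le f (C.R s) := C.o2' _ _ hles
  have hfDt : C.le f (C.D t) := C.le_trans _ _ _ hfRs hst
  -- R(s)|t
  have hRsid : C.D (C.R s) = C.R s := C.dRx s
  have hles' : C.le (C.rstr (C.R s) t) t := C.rstr_le _ _ hRsid hst
  have hdes' : C.D (C.rstr (C.R s) t) = C.R s := C.rstr_dom _ _ hRsid hst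
  have hfD' : C.le f (C.D (C.rstr (C.R s) t)) := by rw [hdes']; exact hfRs
  refine ⟨⟨hfDt, hfD', ?_⟩, ?_⟩
  · -- uniqueness: f|(R(s)|t) ≤ t with domain f
    have h1 : C.le (C.rstr f (C.rstr (C.R s) t)) (C.rstr (C.R s) t) :=
      C.rstr_le _ _ hfid hfD'
    have h2 : C.D (C.rstr f (C.rstr (C.R s) t)) = f := C.rstr_dom _ _ hfid hfD'
    exact (C.rstr_uniq f t _ hfid hfDt (C.le_trans _ _ _ h1 hles') h2).symm
  · intro st hstc
    -- (e|s)∘(f|t) exists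
    have hleft : C.le (C.rstr f t) t := C.rstr_le _ _ hfid hfDt
    have hdft : C.D (C.rstr f t) = f := C.rstr_dom _ _ hfid hfDt
    have hdef : (C.comp (C.rstr e s) (C.rstr f t)).isSome := by
      rw [C.defIff]; exact hdft.symm
    obtain ⟨u, hu⟩ := Option.isSome_iff_exists.mp hdef
    have hust : C.le u st := C.o1 _ _ _ _ _ _ hles hleft hu hstc
    have hdu : C.D u = e := by rw [C.dComp _ _ _ hu, hdes]
    have heDst : C.le e (C.D st) := by
      rw [C.dComp _ _ _ hstc]; exact hes
    rw [hu, C.rstr_uniq e st u he heDst hust hdu]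

end ConstellationsRange
end

section
/- Let Q be a composable constellation. The map ρ from the canonical extension C(Q) to Q given by (s,e)ρ = s is a canonical radiant: it is full, surjective, and satisfies: aρ = bρ implies D(a) = D(b); and aρ = bρ with R(a) = R(b) implies a = b. -/
namespace ConstellationsRange
open Classical

variable {Q : Type*}

/-- Membership of a pair `(s,e)` in the canonical extension `C(Q)`. -/
def ExtP (C : Constellation Q) (p : Q × Q) : Prop :=
  IsProj C p.2 ∧ (C.mul p.1 p.2).isSome

/-- for a composable constellation `Q`, the first-projection map
`ρ : C(Q) → Q`, `(s,e) ↦ s`, is a canonical radiant: it is a radiant, full,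
surjective, and satisfies `aρ = bρ → D a = D b` and `aρ = bρ ∧ R a = R b → a = b`.
(Here `D((s,e)) = (D s, D s)` and `R((s,e)) = (e,e)` in `C(Q)`.) -/
theorem stmt9 (C : Constellation Q)
    (hcomp : ∀ a, ∃ e, IsProj C e ∧ (C.mul a e).isSome) :
    -- ρ is a radiant: composable pairs of C(Q) have composable images
    (∀ p q : Q × Q, ExtP C p → ExtP C q → p.2 = C.D q.1 →
      ∃ u, C.mul p.1 q.1 = some u) ∧
    -- ρ is surjective
    (∀ s : Q, ∃ p : Q × Q, ExtP C p ∧ p.1 = s) ∧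
    -- ρ is full
    (∀ p q : Q × Q, ExtP C p → ExtP C q →
      (∃ u, C.mul p.1 q.1 = some u ∧ ∃ r : Q × Q, ExtP C r ∧ r.1 = u) →
      ∃ p' q' : Q × Q, ExtP C p' ∧ ExtP C q' ∧ p'.1 = p.1 ∧ q'.1 = q.1 ∧
        p'.2 = C.D q'.1) ∧
    -- aρ = bρ implies D a = D b
    (∀ p q : Q × Q, ExtP C p → ExtP C q → p.1 = q.1 → C.D p.1 = C.D q.1) ∧
    -- aρ = bρ and R a = R b imply a = b
    (∀ p q : Q × Q, ExtP C p → ExtP C q → p.1 = q.1 → p.2 = q.2 → p = q) := by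
  refine ⟨?_, ?_, ?_, ?_, ?_⟩
  · rintro p q ⟨_, hpe⟩ _ hpq
    obtain ⟨pe, hpe⟩ := Option.isSome_iff_exists.mp hpe
    rw [hpq] at hpe
    have := C.q2 p.1 (C.D q.1) q.1 pe q.1 hpe (C.q3_mul q.1)
    exact Option.isSome_iff_exists.mp this
  · intro s
    obtain ⟨e, he, hx⟩ := hcomp s
    exact ⟨(s, e), ⟨he, hx⟩, rfl⟩
  · rintro p q hp hq ⟨u, hu, -⟩
    obtain ⟨xy, hxy, -⟩ := C.q1 p.1 (C.D q.1) q.1 q.1 u (C.q3_mul q.1) hu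
    exact ⟨(p.1, C.D q.1), q, ⟨⟨q.1, rfl⟩, by rw [hxy]; rfl⟩, hq, rfl, rfl, rfl⟩
  · intro p q _ _ h; rw [h]
  · intro p q _ _ h1 h2; exact Prod.ext h1 h2

end ConstellationsRange
end

section
/- Let Q be a constellation with pre-range. The set C_S(Q) = {(s,R(s)) : s ∈ Q} contains all identities of C(Q), and C_S(Q) is a subcategory of the canonical extension C(Q) if and only if Q satisfies the congruence condition R(R(s)·t) = R(s·t) whenever s·t exists (i.e., iff Q is a constellation with range). -/
namespace ConstellationsRange
open Classical

variable {Q : Type*}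

/-- for a constellation with pre-range, every identity `(e,e)` of `C(Q)`
lies in `C_S(Q) = {(s,R s)}` (i.e. `R(D s) = D s`), and `C_S(Q)` is closed under the
composition of `C(Q)` iff the congruence condition `R(R(s)·t) = R(s·t)` holds. -/
theorem stmt10 (C : Constellation Q) (PR : PreRange C) :
    (∀ s, PR.R (C.D s) = C.D s) ∧
    ((∀ s t u, PR.R s = C.D t → C.mul s t = some u → PR.R u = PR.R t)
      ↔ (∀ s t u v, C.mul s t = some u → C.mul (PR.R s) t = some v →
          PR.R v = PR.R u)) := by
  -- D is idempotent
  have DD : ∀ a, C.D (C.D a) = C.D a := fun a =>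
    (C.q3_rid a _ _ (C.q3_mul (C.D a))).symm
  -- projections are right identities
  have prid : ∀ e, IsProj C e → ∀ y z, C.mul y e = some z → z = y := by
    rintro e ⟨a, rfl⟩ y z h
    exact C.q3_rid a y z h
  -- projections multiply with themselves
  have pmself : ∀ e, IsProj C e → C.mul e e = some e := by
    rintro e ⟨a, rfl⟩
    have h := C.q3_mul (C.D a)
    rwa [DD] at h
  have Dproj : ∀ e, IsProj C e → C.D e = e := by
    rintro e ⟨a, rfl⟩; exact DD a
  -- D (x·y) = D x
  have Dmul : ∀ x y u, C.mul x y = some u → C.D u = C.D x := by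
    intro x y u h
    have h2 : (C.mul (C.D x) u).isSome := C.q2 (C.D x) x y x u (C.q3_mul x) h
    obtain ⟨w, hw⟩ := Option.isSome_iff_exists.mp h2
    obtain ⟨xy, hxy, hw2⟩ := C.q1 (C.D x) x y u w h hw
    rw [C.q3_mul x] at hxy
    rw [← Option.some.inj hxy] at hw2
    rw [h] at hw2
    rw [← Option.some.inj hw2] at hw
    exact (C.q3_uniq u (C.D x) (fun y z hz => C.q3_rid x y z hz) hw).symm
  constructor
  · intro s
    have h1 : IsProj C (C.D s) := ⟨s, rfl⟩
    have h2 : (C.mul (C.D s) (C.D s)).isSome := by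
      rw [pmself _ h1]; rfl
    exact (PR.uniq (C.D s) (C.D s) h1 h2 (fun f _ hf => hf)).symm
  constructor
  · -- closure → congruence
    intro L s t u v hst hRt
    have hRproj : IsProj C (PR.R s) := PR.proj s
    have hDv : C.D v = PR.R s := by
      rw [Dmul _ _ _ hRt, Dproj _ hRproj]
    -- s · (R s) = s
    obtain ⟨x, hx⟩ := Option.isSome_iff_exists.mp (PR.ex s)
    rw [prid _ hRproj s x hx] at hx
    -- s · v exists
    obtain ⟨w, hw⟩ := Option.isSome_iff_exists.mp
      (C.q2 s (PR.R s) t s v hx hRt)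
    have key : PR.R w = PR.R v := L s v w hDv.symm hw
    -- w = u
    obtain ⟨xy, hxy, hw2⟩ := C.q1 s (PR.R s) t v w hRt hw
    rw [hx] at hxy
    rw [(Option.some.inj hxy).symm] at hw2
    rw [hst] at hw2
    rw [← Option.some.inj hw2] at key
    exact key.symm
  · -- congruence → closure
    intro Rc s t u hcomp hst
    have hRt : C.mul (PR.R s) t = some t := by
      rw [hcomp]; exact C.q3_mul t
    exact (Rc s t u t hst hRt).symm

end ConstellationsRange
end

section
/- If Q is a constellation with range, then every element of C(Q) factors uniquely as a product s'∘i with s' ∈ C_S(Q) and i ∈ C_I(Q); explicitly, (s,e) = (s,R(s))∘(R(s),e). -/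
namespace ConstellationsRange
open Classical

variable {Q : Type*}

/-- if `Q` is a constellation with range, every `(s,e) ∈ C(Q)` factors
uniquely as `(s, R s) ∘ (R s, e)` with `(s,R s) ∈ C_S(Q)` and `(R s, e) ∈ C_I(Q)`. -/
theorem stmt11 (C : Constellation Q) (PR : PreRange C)
    (hcong : ∀ s t u v, C.mul s t = some u → C.mul (PR.R s) t = some v →
      PR.R v = PR.R u) :
    ∀ s e, IsProj C e → (C.mul s e).isSome →
      -- the factorization exists: `(s,e) = (s,R s)∘(R s,e)`
      (C.mul s (PR.R s) = some s ∧ C.D (PR.R s) = PR.R s ∧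
       IsProj C (PR.R s) ∧ (C.mul (PR.R s) e).isSome) ∧
      -- and is unique among factorizations into `C_S(Q)` followed by `C_I(Q)`
      (∀ t i j, (C.mul t (PR.R t)).isSome → IsProj C i → IsProj C j →
        (C.mul i j).isSome → PR.R t = C.D i →
        C.mul t i = some s → j = e → t = s ∧ i = PR.R s) := by
  -- auxiliary: D of a projection is itself
  have Dproj : ∀ e, IsProj C e → C.D e = e := by
    rintro e ⟨x, rfl⟩
    -- first show mul (D x) (D x) = some (D x)
    obtain ⟨xy, hxy, _⟩ := C.q1 (C.D x) (C.D x) x x x (C.q3_mul x) (C.q3_mul x)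
    have hxy' : xy = C.D x := C.q3_rid x (C.D x) xy hxy
    subst hxy'
    exact (C.q3_uniq (C.D x) (C.D x) (C.q3_rid x) hxy).symm
  intro s e he hse
  constructor
  · refine ⟨?_, Dproj _ (PR.proj s), PR.proj s, PR.min s e he hse⟩
    obtain ⟨u, hu⟩ := Option.isSome_iff_exists.mp (PR.ex s)
    obtain ⟨x, hx⟩ := PR.proj s
    have := C.q3_rid x s u (by rw [hx]; exact hu)
    rw [hu, this]
  · intro t i j _ hi _ _ hRt hti _
    have hDi : C.D i = i := Dproj i hi
    have hiRt : i = PR.R t := by rw [← hDi, ← hRt]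
    obtain ⟨x, hx⟩ := PR.proj t
    have hts : s = t := C.q3_rid x t s (by rw [hx, ← hiRt]; exact hti)
    subst hts
    exact ⟨rfl, by rw [hiRt]⟩

end ConstellationsRange
end

section
/- In an I-category C, the I-order ≤_I (defined by s ≤_I t iff there exist insertions i,j with s∘i = j∘t) is a partial order making C an ordered category (compatible with composition, D, and R); moreover e ≤_I f for identities e,f iff there is an insertion from e to f, and if s ≤_I i with i an insertion then s is an insertion. -/
namespace ConstellationsRange
open Classical

variable {Q : Type*}

/-- An I-category: a category with a subcategory of insertions. -/
structure ICat (Q : Type*) extends PCat Q where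
  I : Set Q
  subI : ∀ i j k, i ∈ I → j ∈ I → comp i j = some k → k ∈ I
  idI : ∀ x, D x ∈ I
  /-- (I1) at most one insertion between a pair of identities, in either direction. -/
  i1 : ∀ i j, i ∈ I → j ∈ I →
      ((D i = D j ∧ R i = R j) ∨ (D i = R j ∧ R i = D j)) → i = j
  /-- (I2) if `s∘i ∈ I` with `i ∈ I` then `s ∈ I`. -/
  i2 : ∀ s i k, i ∈ I → comp s i = some k → k ∈ I → s ∈ I

/-- The I-order: `s ≤_I t` iff `s∘i = j∘t` for some insertions `i,j`. -/
def ile (C : ICat Q) (s t : Q) : Prop :=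
  ∃ i ∈ C.I, ∃ j ∈ C.I, ∃ w, C.comp s i = some w ∧ C.comp j t = some w

lemma ICat.ex_comp (C : ICat Q) {x y : Q} (h : C.R x = C.D y) : ∃ z, C.comp x y = some z :=
  Option.isSome_iff_exists.mp ((C.defIff x y).mpr h)

lemma ICat.comp_def (C : ICat Q) {x y z : Q} (h : C.comp x y = some z) : C.R x = C.D y :=
  (C.defIff x y).mp (by rw [h]; rfl)

lemma ICat.assoc1 (C : ICat Q) {x y z yz w : Q} (h1 : C.comp y z = some yz)
    (h2 : C.comp x yz = some w) :
    ∃ xy, C.comp x y = some xy ∧ C.comp xy z = some w := by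
  have hc := C.c1 x y z
  rw [h1, Option.bind_some, h2] at hc
  cases hxy : C.comp x y with
  | none => rw [hxy] at hc; simp at hc
  | some xy => rw [hxy, Option.bind_some] at hc; exact ⟨xy, rfl, hc.symm⟩

lemma ICat.assoc2 (C : ICat Q) {x y z xy w : Q} (h1 : C.comp x y = some xy)
    (h2 : C.comp xy z = some w) :
    ∃ yz, C.comp y z = some yz ∧ C.comp x yz = some w := by
  have hc := C.c1 x y z
  rw [h1, Option.bind_some, h2] at hc
  cases hyz : C.comp y z with
  | none => rw [hyz] at hc; simp at hc
  | some yz => rw [hyz, Option.bind_some] at hc; exact ⟨yz, rfl, hc⟩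

lemma rangeI (C : ICat Q) (x : Q) : C.R x ∈ C.I := by
  have := C.idI (C.R x)
  rwa [C.dRx] at this

/-- in an I-category the I-order is a partial order making the
category an ordered category; on identities it agrees with the existence of an
insertion; and anything I-below an insertion is an insertion. -/
theorem stmt12 (C : ICat Q) :
    (∀ s, ile C s s) ∧
    (∀ s t, ile C s t → ile C t s → s = t) ∧
    (∀ s t u, ile C s t → ile C t u → ile C s u) ∧
    (∀ s t u v su tv, ile C s t → ile C u v →
      C.comp s u = some su → C.comp t v = some tv → ile C su tv) ∧
    (∀ s t, ile C s t → ile C (C.D s) (C.D t)) ∧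
    (∀ s t, ile C s t → ile C (C.R s) (C.R t)) ∧
    (∀ e f, C.D e = e → C.D f = f →
      (ile C e f ↔ ∃ i ∈ C.I, C.D i = e ∧ C.R i = f)) ∧
    (∀ s i, i ∈ C.I → ile C s i → s ∈ C.I) := by
  have refl : ∀ s, ile C s s := fun s =>
    ⟨C.R s, rangeI C s, C.D s, C.idI s, s, C.rId s, C.dId s⟩
  have antisymm : ∀ s t, ile C s t → ile C t s → s = t := by
    rintro s t ⟨i, hi, j, hj, w, hsi, hjt⟩ ⟨i', hi', j', hj', w', hti', hj's⟩
    -- basic domain/range facts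
    have hDi : C.D i = C.R s := (C.comp_def hsi).symm
    have hRi : C.R i = C.R t := by
      rw [← C.rComp _ _ _ hsi, C.rComp _ _ _ hjt]
    have hDi' : C.D i' = C.R t := (C.comp_def hti').symm
    have hRi' : C.R i' = C.R s := by
      rw [← C.rComp _ _ _ hti', C.rComp _ _ _ hj's]
    have hDj : C.D j = C.D s := by
      rw [← C.dComp _ _ _ hjt, C.dComp _ _ _ hsi]
    have hRj : C.R j = C.D t := C.comp_def hjt
    have hDj' : C.D j' = C.D t := by
      rw [← C.dComp _ _ _ hj's, C.dComp _ _ _ hti']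
    have hRj' : C.R j' = C.D s := C.comp_def hj's
    -- i = i', hence R s = R t, hence i is the identity R s
    have hii' : i = i' := C.i1 i i' hi hi' (Or.inr ⟨by rw [hDi, hRi'], by rw [hRi, hDi']⟩)
    have hRst : C.R s = C.R t := by rw [← hDi, hii', hDi']
    have hiRs : i = C.R s := C.i1 i (C.R s) hi (rangeI C s)
      (Or.inl ⟨by rw [hDi, C.dRx], by rw [hRi, C.rRx, hRst]⟩)
    -- j = j', hence D s = D t, hence j is the identity D t
    have hjj' : j = j' := C.i1 j j' hj hj' (Or.inr ⟨by rw [hDj, hRj'], by rw [hRj, hDj']⟩)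
    have hDst : C.D s = C.D t := by rw [← hDj, hjj', hDj']
    have hjDt : j = C.D t := C.i1 j (C.D t) hj (C.idI t)
      (Or.inl ⟨by rw [hDj, C.dD, hDst], by rw [hRj, C.rD]⟩)
    -- conclude
    have hw1 : w = s := by
      rw [hiRs, C.rId] at hsi; exact (Option.some.injEq _ _ ▸ hsi).symm
    have hw2 : w = t := by
      rw [hjDt, C.dId] at hjt; exact (Option.some.injEq _ _ ▸ hjt).symm
    rw [← hw1, hw2]
  have trans : ∀ s t u, ile C s t → ile C t u → ile C s u := by
    rintro s t u ⟨i, hi, j, hj, w1, hsi, hjt⟩ ⟨i', hi', j', hj', w2, hti', hj'u⟩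
    have hRi : C.R i = C.R t := by
      rw [← C.rComp _ _ _ hsi, C.rComp _ _ _ hjt]
    have hRw1 : C.R w1 = C.R t := C.rComp _ _ _ hjt
    -- w1 ∘ i' exists
    obtain ⟨v, hv⟩ := C.ex_comp (x := w1) (y := i') (by rw [hRw1, C.comp_def hti'])
    -- s ∘ (i ∘ i') = v
    obtain ⟨k, hiik, hsk⟩ := C.assoc2 hsi hv
    have hk : k ∈ C.I := C.subI _ _ _ hi hi' hiik
    -- j ∘ w2 = v
    obtain ⟨ti', hti'2, hjti'⟩ := C.assoc2 hjt hv
    rw [hti'] at hti'2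
    have hjw2 : C.comp j w2 = some v := by
      rw [show w2 = ti' from (Option.some.injEq _ _ ▸ hti'2)]; exact hjti'
    -- (j ∘ j') ∘ u = v
    obtain ⟨l, hjjl, hlu⟩ := C.assoc1 hj'u hjw2
    exact ⟨k, hk, l, C.subI _ _ _ hj hj' hjjl, v, hsk, hlu⟩
  have compat : ∀ s t u v su tv, ile C s t → ile C u v →
      C.comp s u = some su → C.comp t v = some tv → ile C su tv := by
    rintro s t u v su tv ⟨i, hi, j, hj, w1, hsi, hjt⟩ ⟨i', hi', j', hj', w2, hui', hj'v⟩ hsu htv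
    have hDi : C.D i = C.R s := (C.comp_def hsi).symm
    have hRi : C.R i = C.R t := by rw [← C.rComp _ _ _ hsi, C.rComp _ _ _ hjt]
    have hDj' : C.D j' = C.D u := by rw [← C.dComp _ _ _ hj'v, C.dComp _ _ _ hui']
    have hRj' : C.R j' = C.D v := C.comp_def hj'v
    -- i = j'
    have hij' : i = j' := C.i1 i j' hi hj'
      (Or.inl ⟨by rw [hDi, hDj', C.comp_def hsu],
               by rw [hRi, hRj', C.comp_def htv]⟩)
    -- s ∘ w2 exists
    have hDw2 : C.D w2 = C.D u := C.dComp _ _ _ hui'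
    obtain ⟨z, hz⟩ := C.ex_comp (x := s) (y := w2) (by rw [hDw2, ← C.comp_def hsu])
    -- su ∘ i' = z
    obtain ⟨su', hsu', hsu'i'⟩ := C.assoc1 hui' hz
    rw [hsu] at hsu'
    have hsui' : C.comp su i' = some z := by
      rw [show su = su' from (Option.some.injEq _ _ ▸ hsu')]; exact hsu'i'
    -- w1 ∘ v = z  (since w2 = i ∘ v via i = j')
    have hiv : C.comp i v = some w2 := by rw [hij']; exact hj'v
    obtain ⟨si, hsi2, hsiv⟩ := C.assoc1 hiv hz
    rw [hsi] at hsi2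
    have hw1v : C.comp w1 v = some z := by
      rw [show w1 = si from (Option.some.injEq _ _ ▸ hsi2)]; exact hsiv
    -- j ∘ tv = z
    obtain ⟨tv', htv', hjtv'⟩ := C.assoc2 hjt hw1v
    rw [htv] at htv'
    have hjtv : C.comp j tv = some z := by
      rw [show tv = tv' from (Option.some.injEq _ _ ▸ htv')]; exact hjtv'
    exact ⟨i', hi', j, hj, z, hsui', hjtv⟩
  refine ⟨refl, antisymm, trans, compat, ?_, ?_, ?_, ?_⟩
  · rintro s t ⟨i, hi, j, hj, w, hsi, hjt⟩
    have hDj : C.D j = C.D s := by rw [← C.dComp _ _ _ hjt, C.dComp _ _ _ hsi]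
    have hRj : C.R j = C.D t := C.comp_def hjt
    refine ⟨j, hj, j, hj, j, ?_, ?_⟩
    · obtain ⟨z, hz⟩ := C.ex_comp (x := C.D s) (y := j) (by rw [C.rD, hDj])
      rwa [C.dL _ _ _ hz] at hz
    · obtain ⟨z, hz⟩ := C.ex_comp (x := j) (y := C.D t) (by rw [hRj, C.dD])
      rwa [C.dR' _ _ _ hz] at hz
  · rintro s t ⟨i, hi, j, hj, w, hsi, hjt⟩
    have hDi : C.D i = C.R s := (C.comp_def hsi).symm
    have hRi : C.R i = C.R t := by rw [← C.rComp _ _ _ hsi, C.rComp _ _ _ hjt]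
    refine ⟨i, hi, i, hi, i, ?_, ?_⟩
    · obtain ⟨z, hz⟩ := C.ex_comp (x := C.R s) (y := i) (by rw [C.rRx, hDi])
      rwa [C.rL _ _ _ hz] at hz
    · obtain ⟨z, hz⟩ := C.ex_comp (x := i) (y := C.R t) (by rw [hRi, C.dRx])
      rwa [C.rR _ _ _ hz] at hz
  · intro e f he hf
    constructor
    · rintro ⟨i, hi, j, hj, w, hei, hjf⟩
      have hwi : w = i := by
        have := C.dL e i w (by rw [he]; exact hei)
        exact this
      have hwj : w = j := by
        have := C.dR' f j w (by rw [hf]; exact hjf)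
        exact this
      refine ⟨i, hi, ?_, ?_⟩
      · rw [← C.comp_def hei, ← he, C.rD]
      · rw [← hwi, C.rComp _ _ _ hjf, ← hf, C.rD]
    · rintro ⟨i, hi, hDie, hRif⟩
      refine ⟨i, hi, i, hi, i, ?_, ?_⟩
      · obtain ⟨z, hz⟩ := C.ex_comp (x := e) (y := i) (by rw [← he, C.rD, he, hDie])
        rwa [show z = i from C.dL e i z (by rw [he]; exact hz)] at hz
      · obtain ⟨z, hz⟩ := C.ex_comp (x := i) (y := f) (by rw [hRif, ← hf, C.dD, hf])
        rwa [show z = i from C.dR' f i z (by rw [hf]; exact hz)] at hz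
  · rintro s i hiI ⟨a, ha, b, hb, w, hsa, hbi⟩
    exact C.i2 s a w ha hsa (C.subI _ _ _ hb hiI hbi)

end ConstellationsRange
end

section
/- A functor F between I-categories C1 and C2 is order-preserving with respect to the I-orders if and only if F maps insertions of C1 to insertions of C2. -/
namespace ConstellationsRange
open Classical

variable {Q : Type*}

/-- a functor between I-categories is order-preserving for the
I-orders iff it maps insertions to insertions. -/
theorem stmt14 {Q1 Q2 : Type*} (C1 : ICat Q1) (C2 : ICat Q2) (F : Q1 → Q2)
    (hcomp : ∀ x y z, C1.comp x y = some z → C2.comp (F x) (F y) = some (F z))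
    (hD : ∀ x, C2.D (F x) = F (C1.D x))
    (hR : ∀ x, C2.R (F x) = F (C1.R x)) :
    (∀ s t, ile C1 s t → ile C2 (F s) (F t)) ↔ (∀ i ∈ C1.I, F i ∈ C2.I) := by
  constructor
  · intro hmono i hi
    -- i ≤_I R i, witnessed by i ∘ (R i) = i = i ∘ (R i)
    have hRi : C1.R i ∈ C1.I := by
      have := C1.idI (C1.R i)
      rwa [C1.dRx] at this
    have h1 : ile C1 i (C1.R i) :=
      ⟨C1.R i, hRi, i, hi, i, C1.rId i, C1.rId i⟩
    obtain ⟨a, ha, b, hb, w, hw1, hw2⟩ := hmono _ _ h1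
    -- comp b (F (R i)) = some w, with F (R i) = R (F i), so w = b
    have hFR : F (C1.R i) = C2.R (F i) := (hR i).symm
    rw [hFR] at hw2
    have hwb : w = b := C2.rR (F i) b w hw2
    subst hwb
    exact C2.i2 (F i) a w ha hw1 hb
  · rintro hins s t ⟨i, hi, j, hj, w, hw1, hw2⟩
    exact ⟨F i, hins i hi, F j, hins j hj, F w, hcomp _ _ _ hw1, hcomp _ _ _ hw2⟩

end ConstellationsRange
end

section
/- Every IS-category is an I-category (with the same subcategory of insertions): in an IS-category, if a∘i lies in I_C with i ∈ I_C, then a ∈ I_C. Moreover, S_C ∩ I_C = D(C), and every element of I_C is a monomorphism. -/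
namespace ConstellationsRange
open Classical

variable {Q : Type*}

/-- An IS-category: a category with subcategories of insertions and surjections,
with unique factorization of every element as a surjection followed by an insertion. -/
structure ISCat (Q : Type*) extends PCat Q where
  I : Set Q
  S : Set Q
  subI : ∀ i j k, i ∈ I → j ∈ I → comp i j = some k → k ∈ I
  subS : ∀ i j k, i ∈ S → j ∈ S → comp i j = some k → k ∈ S
  idI : ∀ x, D x ∈ I
  idS : ∀ x, D x ∈ S
  /-- (IS1) at most one insertion between a pair of identities, in either direction. -/
  is1 : ∀ i j, i ∈ I → j ∈ I →
      ((D i = D j ∧ R i = R j) ∨ (D i = R j ∧ R i = D j)) → i = j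
  /-- (IS2) existence of the factorization `a = s_a ∘ i_a`. -/
  fac : ∀ a, ∃ s i, s ∈ S ∧ i ∈ I ∧ comp s i = some a
  /-- (IS2) uniqueness of the factorization. -/
  facUniq : ∀ a s i s' i', s ∈ S → i ∈ I → s' ∈ S → i' ∈ I →
      comp s i = some a → comp s' i' = some a → s = s' ∧ i = i'

private lemma assoc_aux (C : PCat Q) {s i a m w : Q}
    (h1 : C.comp s i = some a) (h2 : C.comp a m = some w) :
    ∃ im, C.comp i m = some im ∧ C.comp s im = some w := by
  have hc := C.c1 s i m
  rw [h1] at hc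
  simp only [Option.bind_some] at hc
  rw [h2] at hc
  cases him : C.comp i m with
  | none => rw [him] at hc; simp at hc
  | some im => rw [him] at hc; simp only [Option.bind_some] at hc; exact ⟨im, rfl, hc⟩

/-- every IS-category is an I-category with the same insertions
(i.e. (I2) holds); moreover `S_C ∩ I_C = D(C)` and every insertion is a
monomorphism. -/
theorem stmt15 (C : ISCat Q) :
    (∀ a i k, i ∈ C.I → C.comp a i = some k → k ∈ C.I → a ∈ C.I) ∧
    (C.S ∩ C.I = Set.range C.D) ∧
    (∀ i ∈ C.I, Mono C.toPCat i) := by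
  refine ⟨?_, ?_, ?_⟩
  · intro a i k hi hai hk
    obtain ⟨s, j, hs, hj, hsj⟩ := C.fac a
    obtain ⟨ji, hji, hsji⟩ := assoc_aux C.toPCat hsj hai
    have hjiI : ji ∈ C.I := C.subI _ _ _ hj hi hji
    have hu := C.facUniq k s ji (C.D k) k hs hjiI (C.idS k) hk hsji (C.dId k)
    rw [hu.1] at hsj
    have := C.dL k j a hsj
    rw [this]; exact hj
  · ext x
    constructor
    · rintro ⟨hxS, hxI⟩
      have h1 : C.comp x (C.R x) = some x := C.rId x
      have hRxI : C.R x ∈ C.I := by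
        have := C.idI (C.R x); rwa [C.dRx] at this
      have hu := C.facUniq x x (C.R x) (C.D x) x hxS hRxI (C.idS x) hxI h1 (C.dId x)
      exact ⟨x, hu.1.symm⟩
    · rintro ⟨y, rfl⟩
      exact ⟨C.idS y, C.idI y⟩
  · intro m hm x y w hx hy
    obtain ⟨s, i, hs, hi, hsi⟩ := C.fac x
    obtain ⟨s', i', hs', hi', hsi'⟩ := C.fac y
    obtain ⟨im, him, hsim⟩ := assoc_aux C.toPCat hsi hx
    obtain ⟨im', him', hsim'⟩ := assoc_aux C.toPCat hsi' hy
    have himI : im ∈ C.I := C.subI _ _ _ hi hm him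
    have himI' : im' ∈ C.I := C.subI _ _ _ hi' hm him'
    have hu := C.facUniq w s im s' im' hs himI hs' himI' hsim hsim'
    have hii : i = i' := by
      apply C.is1 i i' hi hi'
      left
      constructor
      · have d1 : C.D im = C.D i := C.dComp i m im him
        have d2 : C.D im' = C.D i' := C.dComp i' m im' him'
        rw [← d1, ← d2, hu.2]
      · have r1 : C.R i = C.D m := (C.defIff i m).mp (by rw [him]; rfl)
        have r2 : C.R i' = C.D m := (C.defIff i' m).mp (by rw [him']; rfl)
        rw [r1, r2]
    rw [hu.1, hii, hsi'] at hsi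
    exact (Option.some_injective _ hsi).symm

end ConstellationsRange
end

section
/- In an IS-category C: (a) if a has a left inverse (there is b with b∘a = D(b)), then a ∈ S_C; in particular every isomorphism lies in S_C; (b) if a∘i ∈ S_C with i ∈ I_C, then a ∈ S_C and i = R(a). -/
namespace ConstellationsRange
open Classical

variable {Q : Type*}

/-- If a composite of two insertions is an identity `D b`, then the second
insertion is itself that identity. -/
lemma insert_comp_eq_id (C : ISCat Q) {i₂ i b : Q} (hi2 : i₂ ∈ C.I) (hi : i ∈ C.I)
    (h : C.comp i₂ i = some (C.D b)) : i₂ = C.D b ∧ i = C.D b := by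
  have hd2 : C.D i₂ = C.D b := by
    have := C.dComp _ _ _ h; rw [C.dD] at this; exact this.symm
  have hr : C.R i = C.D b := by
    have := C.rComp _ _ _ h; rw [C.rD] at this; exact this.symm
  have h3 : C.R i₂ = C.D i := (C.defIff i₂ i).mp (by rw [h]; rfl)
  have hii : i₂ = i := C.is1 _ _ hi2 hi (Or.inr ⟨by rw [hd2, hr], h3⟩)
  have h' := h
  rw [hii] at h' 
  have hdi : C.D i = C.D b := by
    have := C.dComp _ _ _ h'; rw [C.dD] at this; exact this.symm
  have hfin : i = C.D b :=
    C.is1 _ _ hi (C.idI b) (Or.inl ⟨by rw [hdi, C.dD], by rw [hr, C.rD]⟩)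
  exact ⟨hii.trans hfin, hfin⟩

/-- in an IS-category, (a) any element with a left inverse lies in
`S_C`; in particular every isomorphism lies in `S_C`; (b) if `a∘i ∈ S_C` with
`i ∈ I_C`, then `a ∈ S_C` and `i = R a`. -/

theorem stmt16 (C : ISCat Q) :
    (∀ a b, C.comp b a = some (C.D b) → a ∈ C.S) ∧
    (∀ a, Iso C.toPCat a → a ∈ C.S) ∧
    (∀ a i k, i ∈ C.I → C.comp a i = some k → k ∈ C.S →
      a ∈ C.S ∧ i = C.R a) := by
  have partA : ∀ a b, C.comp b a = some (C.D b) → a ∈ C.S := by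
    intro a b h
    obtain ⟨s, i, hs, hi, hsi⟩ := C.fac a
    -- b ∘ s exists
    have hRbDa : C.R b = C.D a := (C.defIff b a).mp (by rw [h]; rfl)
    have hDaDs : C.D a = C.D s := C.dComp _ _ _ hsi
    have hbs : (C.comp b s).isSome := (C.defIff b s).mpr (by rw [hRbDa, hDaDs])
    obtain ⟨bs, hbs⟩ := Option.isSome_iff_exists.mp hbs
    have hassoc := C.c1 b s i
    rw [hsi, hbs] at hassoc
    simp only [Option.bind_some] at hassoc
    have hbsi : C.comp bs i = some (C.D b) := by rw [← hassoc]; exact h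
    obtain ⟨s₂, i₂, hs2, hi2, hs2i2⟩ := C.fac bs
    have hassoc2 := C.c1 s₂ i₂ i
    rw [hs2i2] at hassoc2
    -- hassoc2 : (C.comp i₂ i).bind (C.comp s₂) = C.comp bs i = some (D b)
    have hassoc2' : (C.comp i₂ i).bind (C.comp s₂) = some (C.D b) := by
      rw [hassoc2]; exact hbsi
    obtain ⟨j, hj⟩ : ∃ j, C.comp i₂ i = some j := by
      cases hji : C.comp i₂ i with
      | none => rw [hji] at hassoc2'; simp at hassoc2'
      | some j => exact ⟨j, rfl⟩
    rw [hj] at hassoc2'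
    simp only [Option.bind_some] at hassoc2'
    have hjI : j ∈ C.I := C.subI _ _ _ hi2 hi hj
    have hid : C.comp (C.D b) (C.D b) = some (C.D b) := by
      have := C.dId (C.D b); rwa [C.dD] at this
    obtain ⟨hseq, hjeq⟩ := C.facUniq (C.D b) s₂ j (C.D b) (C.D b) hs2 hjI
      (C.idS b) (C.idI b) hassoc2' hid
    subst hjeq
    have hieq : i = C.D b := (insert_comp_eq_id C hi2 hi hj).2
    subst hieq
    have : a = s := C.dR' _ _ _ hsi
    rw [this]; exact hs
  refine ⟨partA, fun a ha => ?_, ?_⟩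
  · obtain ⟨b, _, hba⟩ := ha
    exact partA a b hba
  · intro a i k hi hai hk
    obtain ⟨s, ia, hs, hia, hsia⟩ := C.fac a
    have hassoc := C.c1 s ia i
    rw [hsia] at hassoc
    simp only [Option.bind_some] at hassoc
    rw [hai] at hassoc
    obtain ⟨j, hj⟩ : ∃ j, C.comp ia i = some j := by
      cases hji : C.comp ia i with
      | none => rw [hji] at hassoc; simp at hassoc
      | some j => exact ⟨j, rfl⟩
    rw [hj] at hassoc
    simp only [Option.bind_some] at hassoc
    have hjI : j ∈ C.I := C.subI _ _ _ hia hi hj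
    have hRkI : C.R k ∈ C.I := by
      have := C.idI (C.R k); rwa [C.dRx] at this
    obtain ⟨hseq, hjeq⟩ := C.facUniq k s j k (C.R k) hs hjI hk hRkI hassoc (C.rId k)
    subst hjeq
    have hRkD : C.D (C.R k) = C.R k := C.dRx k
    obtain ⟨hiaeq, hieq⟩ := insert_comp_eq_id C hia hi (b := C.R k) (by rw [hRkD]; exact hj)
    have has : a = s := by
      refine C.dR' (C.R k) s a ?_
      rw [← hiaeq]; exact hsia
    have haS : a ∈ C.S := by rw [has]; exact hs
    refine ⟨haS, ?_⟩
    have hRaDi : C.R a = C.D i := (C.defIff a i).mp (by rw [hai]; rfl)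
    rw [hRaDi, hieq, C.dD, hRkD]


end ConstellationsRange
end

section
/- In an IS-category C, an element s ∈ S_C is an epimorphism in the subcategory S_C if and only if it is an epimorphism in C. Consequently, C is regular (all of S_C consists of epimorphisms of C) if and only if S_C is left cancellative as a category. -/
namespace ConstellationsRange
open Classical

variable {Q : Type*}

/-- Epimorphism within the subcategory `S_C`. -/
def EpiS (C : ISCat Q) (s : Q) : Prop :=
  ∀ x y w, x ∈ C.S → y ∈ C.S →
    C.comp s x = some w → C.comp s y = some w → x = y

/-- `s ∈ S_C` is an epimorphism in `S_C` iff it is an epimorphism in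
`C`; hence `C` is regular (every member of `S_C` is an epimorphism of `C`) iff
`S_C` is left cancellative as a category. -/
theorem stmt17 (C : ISCat Q) :
    (∀ s ∈ C.S, EpiS C s ↔ Epi C.toPCat s) ∧
    ((∀ s ∈ C.S, Epi C.toPCat s) ↔ (∀ s ∈ C.S, EpiS C s)) := by
  have key : ∀ s ∈ C.S, EpiS C s → Epi C.toPCat s := by
    intro s hs hes x y w hx hy
    obtain ⟨sx, ix, hsx, hix, hfx⟩ := C.fac x
    obtain ⟨sy, iy, hsy, hiy, hfy⟩ := C.fac y
    have hax : ∃ u, C.comp s sx = some u ∧ C.comp u ix = some w := by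
      have := C.c1 s sx ix
      rw [hfx, Option.bind_some, hx] at this
      cases hcs : C.comp s sx with
      | none => rw [hcs] at this; simp at this
      | some u => rw [hcs] at this; exact ⟨u, rfl, this.symm⟩
    have hay : ∃ v, C.comp s sy = some v ∧ C.comp v iy = some w := by
      have := C.c1 s sy iy
      rw [hfy, Option.bind_some, hy] at this
      cases hcs : C.comp s sy with
      | none => rw [hcs] at this; simp at this
      | some v => rw [hcs] at this; exact ⟨v, rfl, this.symm⟩
    obtain ⟨u, hu1, hu2⟩ := hax
    obtain ⟨v, hv1, hv2⟩ := hay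
    have huS : u ∈ C.S := C.subS s sx u hs hsx hu1
    have hvS : v ∈ C.S := C.subS s sy v hs hsy hv1
    have huv := C.facUniq w u ix v iy huS hix hvS hiy hu2 hv2
    have hsxy : sx = sy := hes sx sy u hsx hsy hu1 (huv.1 ▸ hv1)
    have : some x = some y := by rw [← hfx, ← hfy, hsxy, huv.2]
    exact Option.some.inj this
  constructor
  · intro s hs
    exact ⟨key s hs, fun he x y w _ _ hx hy => he x y w hx hy⟩
  · exact ⟨fun h s hs x y w _ _ hx hy => h s hs x y w hx hy,
      fun h s hs => key s hs (h s hs)⟩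

end ConstellationsRange
end

section
/- In an IS-category C, S_C contains all epimorphisms of C if and only if I_C ∖ D(C) contains no epimorphisms. -/
namespace ConstellationsRange
open Classical

variable {Q : Type*}

/-- in an IS-category, `S_C` contains all epimorphisms iff
`I_C ∖ D(C)` contains no epimorphisms. -/
theorem stmt18 (C : ISCat Q) :
    (∀ a, Epi C.toPCat a → a ∈ C.S)
    ↔ (∀ i, i ∈ C.I → i ∉ Set.range C.D → ¬ Epi C.toPCat i) := by
  constructor
  · intro h i hiI hiD hEpi
    have hiS : i ∈ C.S := h i hEpi
    -- i ∈ S ∩ I implies i is an identity: use uniqueness of factorization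
    have h1 : C.comp (C.D i) i = some i := C.dId i
    have h2 : C.comp i (C.R i) = some i := C.rId i
    have hRI : C.R i ∈ C.I := by
      have := C.idI (C.R i); rwa [C.dRx] at this
    have := C.facUniq i (C.D i) i i (C.R i) (C.idS i) hiI hiS hRI h1 h2
    exact hiD ⟨i, this.1⟩
  · intro h a hEpi
    obtain ⟨s, i, hsS, hiI, hfac⟩ := C.fac a
    -- i is an epimorphism
    have hiEpi : Epi C.toPCat i := by
      intro x y w hx hy
      obtain ⟨sw, hsw⟩ := Option.isSome_iff_exists.mp (C.c2 s i x a w hfac hx)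
      have hax : C.comp a x = some sw := by
        have := C.c1 s i x
        rw [hx, hfac] at this
        simpa [hsw] using this.symm
      have hay : C.comp a y = some sw := by
        have := C.c1 s i y
        rw [hy, hfac] at this
        simpa [hsw] using this.symm
      exact hEpi x y sw hax hay
    -- hence i ∈ range D
    by_cases hiD : i ∈ Set.range C.D
    · obtain ⟨t, ht⟩ := hiD
      have hiS : i ∈ C.S := ht ▸ C.idS t
      exact C.subS s i a hsS hiS hfac
    · exact absurd hiEpi (h i hiI hiD)

end ConstellationsRange
end
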